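/- Let E be an elliptic curve over an algebraically closed field, p ∈ E a point, and D̄ a divisor of order exactly 2 in the Jacobian of E. Let S = E × E with projections π₁, π₂, and set H = π₁^*(p) + π₂^*(p) and D = π₂^*(D̄). Then for all integers m, n, dim_k H^1(S, O_S(mH + nD)) equals 2 if m = 0 and n is even, and equals 0 otherwise. -/

import Mathlib

/-!
Mathlib does not yet have sheaf cohomology of line bundles on curves, so we
axiomatize the cohomological data of a smooth projective curve of genus 1
(an elliptic curve) over an algebraically closed field `k`: its (closed) points,
divisors (finitely supported `ℤ`-valued functions on points), linear equivalence
of divisors, and the dimensions `h0 D = dim_k H^0(E, O_E(D))`,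
`h1 D = dim_k H^1(E, O_E(D))`, subject to the standard axioms: invariance under
linear equivalence, Riemann–Roch for genus 1, Serre duality (the canonical
divisor of an elliptic curve is trivial), `h^0(O_E) = 1`, and the fact that a
divisor class with a nonzero global section is linearly equivalent to an
effective divisor.
-/

/-- The degree of a divisor: the sum of its coefficients. -/
def divDeg {P : Type*} (D : P →₀ ℤ) : ℤ := D.sum fun _ n => n

/-- Cohomological data of an elliptic curve over an algebraically closed field `k`. -/
structure EllipticCurveCohomology (k : Type*) [Field k] [IsAlgClosed k] where
  /-- the closed points of the curve -/
  Point : Type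
  point_nonempty : Nonempty Point
  /-- `h0 D = dim_k H^0(E, O_E(D))` -/
  h0 : (Point →₀ ℤ) → ℕ
  /-- `h1 D = dim_k H^1(E, O_E(D))` -/
  h1 : (Point →₀ ℤ) → ℕ
  /-- linear equivalence of divisors -/
  LinEquiv : (Point →₀ ℤ) → (Point →₀ ℤ) → Prop
  linEquiv_refl : ∀ D, LinEquiv D D
  linEquiv_symm : ∀ {D D'}, LinEquiv D D' → LinEquiv D' D
  linEquiv_trans : ∀ {D D' D''}, LinEquiv D D' → LinEquiv D' D'' → LinEquiv D D''
  linEquiv_add : ∀ {D D'} (E : Point →₀ ℤ), LinEquiv D D' → LinEquiv (D + E) (D' + E)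
  h0_congr : ∀ {D D'}, LinEquiv D D' → h0 D = h0 D'
  h1_congr : ∀ {D D'}, LinEquiv D D' → h1 D = h1 D'
  degree_congr : ∀ {D D'}, LinEquiv D D' → divDeg D = divDeg D'
  /-- Riemann–Roch on a curve of genus 1 -/
  riemann_roch : ∀ D, (h0 D : ℤ) - h1 D = divDeg D
  /-- Serre duality; the canonical divisor of an elliptic curve is trivial -/
  serre_duality : ∀ D, h1 D = h0 (-D)
  h0_trivial : h0 0 = 1
  /-- a divisor class with a nonzero section is effective -/
  h0_pos_effective : ∀ D, 0 < h0 D →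
    ∃ E : Point →₀ ℤ, (∀ p, 0 ≤ E p) ∧ LinEquiv D E

/-!
By Riemann–Roch and Serre duality on a genus-one curve, `h^0` vanishes in negative degree,
`h^1` in positive degree, and in degree zero both equal `1` on principal classes and `0`
otherwise. So the Künneth sum vanishes unless `m = 0`, where it equals
`h^1(nD̄) + h^0(nD̄)`; since `D̄` has order exactly `2`, `nD̄` is principal iff `n` is even.
-/

lemma divDeg_eq_degree {P : Type*} (A : P →₀ ℤ) : divDeg A = A.degree := rfl

lemma Finsupp.eq_zero_of_degree_eq_zero_of_nonneg {σ R : Type*} [AddCommMonoid R]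
    [PartialOrder R] [IsOrderedAddMonoid R] {d : σ →₀ R} (hd : d.degree = 0)
    (h : ∀ i, 0 ≤ d i) : d = 0 := by
  ext i
  by_contra hi
  exact hi ((Finset.sum_eq_zero_iff_of_nonneg fun j _ => h j).mp hd i (mem_support_iff.mpr hi))

lemma AddSubgroup.zsmul_mem_iff_even {G : Type*} [AddCommGroup G] (H : AddSubgroup G)
    {x : G} (hx : x ∉ H) (h2 : 2 • x ∈ H) (n : ℤ) : n • x ∈ H ↔ Even n := by
  obtain ⟨r, rfl | rfl⟩ := Int.even_or_odd' n
  · have : (2 * r) • x = r • (2 • x) := by rw [mul_comm, mul_zsmul, ofNat_zsmul]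
    simp only [this, H.zsmul_mem h2, even_two_mul]
  · have : (2 * r + 1) • x = r • (2 • x) + x := by
      rw [add_zsmul, one_zsmul, mul_comm, mul_zsmul, ofNat_zsmul]
    simp only [this, H.add_mem_cancel_left (H.zsmul_mem h2 r), hx, false_iff,
      Int.not_even_iff_odd, odd_two_mul_add_one]

namespace EllipticCurveCohomology

variable {k : Type*} [Field k] [IsAlgClosed k] (C : EllipticCurveCohomology k)

def principal : AddSubgroup (C.Point →₀ ℤ) where
  carrier := {A | C.LinEquiv A 0}
  zero_mem' := C.linEquiv_refl 0
  add_mem' {A B} hA hB := by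
    have := C.linEquiv_add B hA
    rw [zero_add] at this
    exact C.linEquiv_trans this hB
  neg_mem' {A} hA := by
    have := C.linEquiv_add (-A) hA
    rw [add_neg_cancel, zero_add] at this
    exact C.linEquiv_symm this

lemma h0_eq_zero_of_divDeg_neg {A : C.Point →₀ ℤ} (hA : divDeg A < 0) : C.h0 A = 0 := by
  by_contra h
  obtain ⟨E, hE, hAE⟩ := C.h0_pos_effective A (Nat.pos_of_ne_zero h)
  have hE_deg : 0 ≤ divDeg E := Finset.sum_nonneg fun p _ => hE p
  linarith [C.degree_congr hAE]

lemma h1_eq_zero_of_divDeg_pos {A : C.Point →₀ ℤ} (hA : 0 < divDeg A) : C.h1 A = 0 := by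
  rw [C.serre_duality]
  exact C.h0_eq_zero_of_divDeg_neg (by simpa [divDeg_eq_degree] using hA)

open Classical in
lemma h0_of_divDeg_eq_zero {A : C.Point →₀ ℤ} (hA : divDeg A = 0) :
    C.h0 A = if A ∈ C.principal then 1 else 0 := by
  split_ifs with h
  · rw [C.h0_congr h, C.h0_trivial]
  · by_contra h0
    obtain ⟨E, hE, hAE⟩ := C.h0_pos_effective A (Nat.pos_of_ne_zero h0)
    have hE_deg : E.degree = 0 := by rw [← divDeg_eq_degree, ← C.degree_congr hAE, hA]
    rw [Finsupp.eq_zero_of_degree_eq_zero_of_nonneg hE_deg hE] at hAE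
    exact h hAE

open Classical in
lemma h1_of_divDeg_eq_zero {A : C.Point →₀ ℤ} (hA : divDeg A = 0) :
    C.h1 A = if A ∈ C.principal then 1 else 0 := by
  rw [C.serre_duality, C.h0_of_divDeg_eq_zero (by simpa [divDeg_eq_degree] using hA)]
  simp only [neg_mem_iff]

end EllipticCurveCohomology

/-- Let `E` be an elliptic curve over an algebraically closed field,
`p ∈ E` a point, and `D̄` a divisor of order exactly `2` in the Jacobian of `E`
(`D̄ ≁ 0`, `2D̄ ∼ 0`, `deg D̄ = 0`). Let `S = E × E`, `H = π₁^*(p) + π₂^*(p)` and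
`D = π₂^*(D̄)`. The function `h1S m n = dim_k H^1(S, O_S(mH + nD))` satisfies, by the
Künneth formula,
`h1S m n = h^0(E, mp)·h^1(E, mp + nD̄) + h^1(E, mp)·h^0(E, mp + nD̄)`.
Then `h1S m n = 2` if `m = 0` and `n` is even, and `h1S m n = 0` otherwise. -/
theorem h1_of_product_surface
    (k : Type*) [Field k] [IsAlgClosed k] (C : EllipticCurveCohomology k)
    (p : C.Point) (D : C.Point →₀ ℤ) (hdeg : divDeg D = 0)
    (hne : ¬ C.LinEquiv D 0) (htwo : C.LinEquiv (2 • D) 0)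
    (h1S : ℤ → ℤ → ℕ)
    (kunneth : ∀ m n : ℤ, h1S m n =
      C.h0 (Finsupp.single p m) * C.h1 (Finsupp.single p m + n • D) +
      C.h1 (Finsupp.single p m) * C.h0 (Finsupp.single p m + n • D)) :
    ∀ m n : ℤ, h1S m n = if m = 0 ∧ Even n then 2 else 0 := by
  intro m n
  have hdeg_single : divDeg (Finsupp.single p m) = m := Finsupp.degree_single p m
  have hdeg_sum : divDeg (Finsupp.single p m + n • D) = m := by
    rw [divDeg_eq_degree, map_add, map_zsmul, ← divDeg_eq_degree, ← divDeg_eq_degree,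
      hdeg_single, hdeg, smul_zero, add_zero]
  rw [kunneth]
  rcases lt_trichotomy m 0 with hm | rfl | hm
  · rw [C.h0_eq_zero_of_divDeg_neg (by omega), C.h0_eq_zero_of_divDeg_neg (by omega),
      if_neg (fun h => hm.ne h.1)]
    simp
  · simp only [Finsupp.single_zero, zero_add] at hdeg_single hdeg_sum ⊢
    have hnD_principal : n • D ∈ C.principal ↔ Even n :=
      C.principal.zsmul_mem_iff_even hne htwo n
    rw [C.h0_of_divDeg_eq_zero hdeg_single, C.h1_of_divDeg_eq_zero hdeg_single,
      C.h0_of_divDeg_eq_zero hdeg_sum, C.h1_of_divDeg_eq_zero hdeg_sum]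
    by_cases hn : Even n <;> simp [hn, hnD_principal, C.principal.zero_mem]
  · rw [C.h1_eq_zero_of_divDeg_pos (by omega), C.h1_eq_zero_of_divDeg_pos (by omega),
      if_neg (fun h => hm.ne' h.1)]
    simp
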